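/- arXiv:1807.10848 — 8 statements merged into one kernel-verified Lean document; each statement's English description precedes it below -/
import Mathlib

section
/- If all points of a finite planar point set S have positive y-coordinates, then the map (x,y) ↦ (x/y, -1/y) applied to S preserves the orientation (sign of the triple determinant) of every triple of points of S. -/
/-- Signed twice-area / 3x3 orientation determinant of three planar points. -/
def det3 (p q r : ℝ × ℝ) : ℝ :=
  (q.1 - p.1) * (r.2 - p.2) - (q.2 - p.2) * (r.1 - p.1)

/-- Orientation (chirotope) of a triple of points. -/
noncomputable def chi (p q r : ℝ × ℝ) : ℝ := Real.sign (det3 p q r)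

/-- A finite point set is in general position if no three distinct points are collinear. -/
def GenPos (S : Finset (ℝ × ℝ)) : Prop :=
  ∀ p ∈ S, ∀ q ∈ S, ∀ r ∈ S, p ≠ q → q ≠ r → p ≠ r → det3 p q r ≠ 0

/-- A finite point set is in convex position if every point is a vertex of the hull. -/
def ConvexPos (X : Finset (ℝ × ℝ)) : Prop :=
  ∀ p ∈ X, p ∉ convexHull ℝ ((X.erase p : Finset (ℝ × ℝ)) : Set (ℝ × ℝ))

/-- `X` is a `k`-hole of `S`: a `k`-subset in convex position whose convex hull
contains no point of `S \ X`. -/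
def IsHole (S X : Finset (ℝ × ℝ)) (k : ℕ) : Prop :=
  X ⊆ S ∧ X.card = k ∧ ConvexPos X ∧
    ∀ p ∈ S, p ∉ X → p ∉ convexHull ℝ (X : Set (ℝ × ℝ))

/-- Two holes are disjoint if their convex hulls are disjoint. -/
def DisjHoles (X Y : Finset (ℝ × ℝ)) : Prop :=
  Disjoint (convexHull ℝ (X : Set (ℝ × ℝ))) (convexHull ℝ (Y : Set (ℝ × ℝ)))

/-- The map `(x,y) ↦ (x/y, -1/y)` preserves all triple orientations of a finite
point set whose points all have positive `y`-coordinate. -/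
theorem proj_transform_preserves_orientations (S : Finset (ℝ × ℝ))
    (hS : ∀ p ∈ S, 0 < p.2) :
    ∀ p ∈ S, ∀ q ∈ S, ∀ r ∈ S,
      chi (p.1 / p.2, -1 / p.2) (q.1 / q.2, -1 / q.2) (r.1 / r.2, -1 / r.2) =
        chi p q r := by
  intro p hp q hq r hr
  have hp2 := hS p hp
  have hq2 := hS q hq
  have hr2 := hS r hr
  have hdet : det3 (p.1 / p.2, -1 / p.2) (q.1 / q.2, -1 / q.2) (r.1 / r.2, -1 / r.2)
      = det3 p q r / (p.2 * q.2 * r.2) := by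
    simp only [det3]
    field_simp
    ring
  have hc : 0 < p.2 * q.2 * r.2 := by positivity
  rw [chi, chi, hdet]
  rcases lt_trichotomy (det3 p q r) 0 with h | h | h
  · rw [Real.sign_of_neg h, Real.sign_of_neg (div_neg_of_neg_of_pos h hc)]
  · rw [h, zero_div]
  · rw [Real.sign_of_pos h, Real.sign_of_pos (div_pos h hc)]
end

section
/- Let S = {s_1, ..., s_n} be a finite planar point set in general position such that s_1 = (0,0) and all other points have positive x- and y-coordinates, and such that the slopes x_i/y_i of s_2,...,s_n are strictly increasing. Then there exists a point set S' = {t_1,...,t_n} with the same triple orientations as S (with the same labeling) in which the points t_1, ..., t_n have strictly increasing x-coordinates. -/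
/-!
The projective transformation `(x, y) ↦ (x / y, -1 / y)` preserves the orientation of every
triple of points in the upper half-plane, and it maps each line `x = m y` through the origin to
the vertical line `x = m`. So the points other than the origin become points with increasing
`x`-coordinates, while the origin itself goes to the point at infinity in the vertical direction.
Replacing it by a point far enough down, to the left of all the others, keeps every orientation
of a triple through it, since such an orientation only compares the `x`-coordinates of the other
two points.
-/

open Filter

lemma Real.sign_mul_of_pos {c : ℝ} (hc : 0 < c) (x : ℝ) : Real.sign (c * x) = Real.sign x := by
  rcases lt_trichotomy x 0 with hx | rfl | hx
  · rw [Real.sign_of_neg hx, Real.sign_of_neg (mul_neg_of_pos_of_neg hc hx)]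
  · rw [mul_zero]
  · rw [Real.sign_of_pos hx, Real.sign_of_pos (mul_pos hc hx)]

lemma det3_swap (p q r : ℝ × ℝ) : det3 p r q = -det3 p q r := by
  unfold det3; ring

lemma chi_rotate (p q r : ℝ × ℝ) : chi p q r = chi q r p := by
  unfold chi det3; ring_nf

lemma chi_eq_of_eq_off_and_at {ι : Type*} (P : ι → Prop) (hP : ∀ i j, P i → P j → i = j)
    (s t : ι → ℝ × ℝ)
    (hthrough : ∀ i j k, P i → ¬P j → ¬P k → j ≠ k →
      chi (t i) (t j) (t k) = chi (s i) (s j) (s k))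
    (hoff : ∀ i j k, ¬P i → ¬P j → ¬P k → chi (t i) (t j) (t k) = chi (s i) (s j) (s k))
    (i j k : ι) : chi (t i) (t j) (t k) = chi (s i) (s j) (s k) := by
  by_cases hij : i = j
  · subst hij; simp [chi, det3]
  by_cases hjk : j = k
  · subst hjk; simp [chi, det3, mul_comm]
  by_cases hik : i = k
  · subst hik; simp [chi, det3]
  by_cases hi : P i
  · exact hthrough i j k hi (fun hj ↦ hij (hP i j hi hj)) (fun hk ↦ hik (hP i k hi hk)) hjk
  by_cases hj : P j
  · rw [chi_rotate (t i), chi_rotate (s i)]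
    exact hthrough j k i hj (fun hk ↦ hjk (hP j k hj hk)) hi (Ne.symm hik)
  by_cases hk : P k
  · rw [← chi_rotate (t k), ← chi_rotate (s k)]
    exact hthrough k i j hk hi hj hij
  exact hoff i j k hi hj hk

noncomputable def projTransform (p : ℝ × ℝ) : ℝ × ℝ := (p.1 / p.2, -1 / p.2)

lemma det3_projTransform {p q r : ℝ × ℝ} (hp : p.2 ≠ 0) (hq : q.2 ≠ 0) (hr : r.2 ≠ 0) :
    det3 (projTransform p) (projTransform q) (projTransform r)
      = (p.2 * q.2 * r.2)⁻¹ * det3 p q r := by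
  unfold det3 projTransform; field_simp; ring

lemma chi_projTransform {p q r : ℝ × ℝ} (hp : 0 < p.2) (hq : 0 < q.2) (hr : 0 < r.2) :
    chi (projTransform p) (projTransform q) (projTransform r) = chi p q r := by
  rw [chi, det3_projTransform hp.ne' hq.ne' hr.ne',
    Real.sign_mul_of_pos (inv_pos.2 (by positivity)), chi]

lemma chi_origin {p q : ℝ × ℝ} (hp : 0 < p.2) (hq : 0 < q.2) :
    chi (0, 0) p q = Real.sign ((projTransform p).1 - (projTransform q).1) := by
  have : det3 (0, 0) p q = p.2 * q.2 * ((projTransform p).1 - (projTransform q).1) := by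
    unfold det3 projTransform; field_simp; ring
  rw [chi, this, Real.sign_mul_of_pos (mul_pos hp hq)]

lemma det3_eq_add_mul (a b : ℝ) (q r : ℝ × ℝ) :
    det3 (a, b) q r = det3 (a, 0) q r + b * (r.1 - q.1) := by
  unfold det3; ring

lemma eventually_det3_neg_atBot (a : ℝ) {q r : ℝ × ℝ} (h : q.1 < r.1) :
    ∀ᶠ b in atBot, det3 (a, b) q r < 0 := by
  have hd : 0 < r.1 - q.1 := sub_pos.2 h
  filter_upwards [eventually_lt_atBot (-det3 (a, 0) q r / (r.1 - q.1))] with b hb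
  rw [det3_eq_add_mul]
  linarith [(lt_div_iff₀ hd).1 hb]

lemma eventually_chi_eq_sign_atBot (a : ℝ) {q r : ℝ × ℝ} (h : q.1 ≠ r.1) :
    ∀ᶠ b in atBot, chi (a, b) q r = Real.sign (q.1 - r.1) := by
  rcases h.lt_or_gt with h | h
  · filter_upwards [eventually_det3_neg_atBot a h] with b hb
    rw [chi, Real.sign_of_neg hb, Real.sign_of_neg (sub_neg.2 h)]
  · filter_upwards [eventually_det3_neg_atBot a h] with b hb
    rw [chi, ← neg_neg (det3 _ q r), ← det3_swap, Real.sign_neg, Real.sign_of_neg hb,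
      Real.sign_of_pos (sub_pos.2 h), neg_neg]

lemma exists_left_point_chi_eq_sign {ι : Type*} [Finite ι] (u : ι → ℝ × ℝ) :
    ∃ c : ℝ × ℝ, (∀ i, c.1 < (u i).1) ∧
      ∀ j k, (u j).1 ≠ (u k).1 → chi c (u j) (u k) = Real.sign ((u j).1 - (u k).1) := by
  obtain ⟨a, ha⟩ := (eventually_all.2 fun i ↦ eventually_lt_atBot (u i).1).exists
  obtain ⟨b, hb⟩ := (eventually_all.2 fun j ↦ eventually_all.2 fun k ↦
    eventually_imp_distrib_left.2 fun h : (u j).1 ≠ (u k).1 ↦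
      eventually_chi_eq_sign_atBot a h).exists
  exact ⟨(a, b), ha, hb⟩

theorem exists_copy_with_increasing_x_general (n : ℕ) (s : Fin n → ℝ × ℝ)
    (h0 : ∀ i : Fin n, (i : ℕ) = 0 → s i = (0, 0))
    (hpos : ∀ i : Fin n, (i : ℕ) ≠ 0 → 0 < (s i).1 ∧ 0 < (s i).2)
    (hslope : ∀ i j : Fin n, (i : ℕ) ≠ 0 → i < j →
      (s i).1 / (s i).2 < (s j).1 / (s j).2) :
    ∃ t : Fin n → ℝ × ℝ,
      (∀ i j k : Fin n, chi (t i) (t j) (t k) = chi (s i) (s j) (s k)) ∧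
        StrictMono fun i => (t i).1 := by
  let u : Fin n → ℝ × ℝ := fun i ↦ projTransform (s i)
  have hu : ∀ i j : Fin n, (i : ℕ) ≠ 0 → i < j → (u i).1 < (u j).1 := hslope
  have hy : ∀ i : Fin n, (i : ℕ) ≠ 0 → 0 < (s i).2 := fun i hi ↦ (hpos i hi).2
  obtain ⟨c, hc_left, hc_chi⟩ := exists_left_point_chi_eq_sign u
  let t : Fin n → ℝ × ℝ := fun i ↦ if (i : ℕ) = 0 then c else u i
  refine ⟨t, chi_eq_of_eq_off_and_at (fun i : Fin n ↦ (i : ℕ) = 0)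
    (fun i j hi hj ↦ Fin.ext (hi.trans hj.symm)) s t ?_ ?_, ?_⟩
  · intro i j k hi hj hk hjk
    have hujk : (u j).1 ≠ (u k).1 := by
      rcases Fin.lt_or_lt_of_ne hjk with h | h
      exacts [(hu j k hj h).ne, (hu k j hk h).ne']
    simp only [t, if_pos hi, if_neg hj, if_neg hk]
    rw [hc_chi j k hujk, h0 i hi, chi_origin (hy j hj) (hy k hk)]
  · intro i j k hi hj hk
    simp only [t, if_neg hi, if_neg hj, if_neg hk]
    exact chi_projTransform (hy i hi) (hy j hj) (hy k hk)
  · intro i j hij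
    have hj : (j : ℕ) ≠ 0 := by omega
    by_cases hi : (i : ℕ) = 0
    · simpa only [t, if_pos hi, if_neg hj] using hc_left j
    · simpa only [t, if_neg hi, if_neg hj] using hu i j hi hij

/-- A labeled point set with `s 0 = (0,0)`, all other points in the open positive
quadrant, sorted radially around `s 0` (increasing slopes `x/y`), and in general
position, is order-type equivalent to a point set with strictly increasing
`x`-coordinates. -/
theorem exists_copy_with_increasing_x (n : ℕ) (s : Fin n → ℝ × ℝ)
    (h0 : ∀ i : Fin n, (i : ℕ) = 0 → s i = (0, 0))
    (hpos : ∀ i : Fin n, (i : ℕ) ≠ 0 → 0 < (s i).1 ∧ 0 < (s i).2)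
    (hslope : ∀ i j : Fin n, (i : ℕ) ≠ 0 → i < j →
      (s i).1 / (s i).2 < (s j).1 / (s j).2)
    (hgp : ∀ i j k : Fin n, i ≠ j → j ≠ k → i ≠ k → det3 (s i) (s j) (s k) ≠ 0) :
    ∃ t : Fin n → ℝ × ℝ,
      (∀ i j k : Fin n, chi (t i) (t j) (t k) = chi (s i) (s j) (s k)) ∧
        StrictMono fun i => (t i).1 :=
  exists_copy_with_increasing_x_general n s h0 hpos hslope
end

section
/- Let A and B be finite nonempty planar point sets such that A ∪ B is in general position, and suppose some line strictly separates A from B. Then there exist points a ∈ A and b ∈ B such that every point a' ∈ A \ {a} satisfies χ(a,b,a') ≤ 0 and every point b' ∈ B \ {b} satisfies χ(a,b,b') ≥ 0, or the same with all inequalities reversed. -/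
/-- If a line strictly separates two finite nonempty point sets `A` and `B`
(with `A ∪ B` in general position), then there are `a ∈ A`, `b ∈ B` such that
the line through `a` and `b` weakly separates `A` from `B`. -/
theorem exists_separating_pair (A B : Finset (ℝ × ℝ))
    (hA : A.Nonempty) (hB : B.Nonempty) (hgp : GenPos (A ∪ B))
    (hsep : ∃ u : ℝ × ℝ, ∃ c : ℝ, u ≠ 0 ∧
      (∀ a ∈ A, u.1 * a.1 + u.2 * a.2 < c) ∧
      (∀ b ∈ B, c < u.1 * b.1 + u.2 * b.2)) :
    ∃ a ∈ A, ∃ b ∈ B,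
      ((∀ a' ∈ A, a' ≠ a → chi a b a' ≤ 0) ∧ (∀ b' ∈ B, b' ≠ b → 0 ≤ chi a b b')) ∨
      ((∀ a' ∈ A, a' ≠ a → 0 ≤ chi a b a') ∧ (∀ b' ∈ B, b' ≠ b → chi a b b' ≤ 0)) := by
  obtain ⟨u, c, hu, hAlt, hBgt⟩ := hsep
  set X : ℝ × ℝ → ℝ := fun p => u.1 * p.1 + u.2 * p.2 with hX
  set Y : ℝ × ℝ → ℝ := fun p => -u.2 * p.1 + u.1 * p.2 with hY
  have hK : 0 < u.1 ^ 2 + u.2 ^ 2 := by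
    have h : u.1 ≠ 0 ∨ u.2 ≠ 0 := by
      by_contra h
      push_neg at h
      exact hu (Prod.ext h.1 h.2)
    rcases h with h | h
    · positivity
    · positivity
  have hpos : ∀ a ∈ A, ∀ b ∈ B, 0 < X b - X a := fun a ha b hb => by
    have h1 := hAlt a ha
    have h2 := hBgt b hb
    simp only [hX]
    linarith
  have hdet : ∀ p q r : ℝ × ℝ,
      (X q - X p) * (Y r - Y p) - (Y q - Y p) * (X r - X p)
        = (u.1 ^ 2 + u.2 ^ 2) * det3 p q r := by
    intro p q r
    simp only [hX, hY, det3]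
    ring
  obtain ⟨⟨a, b⟩, hab, hmax⟩ := (A ×ˢ B).exists_max_image
      (fun pq => (Y pq.2 - Y pq.1) / (X pq.2 - X pq.1)) (hA.product hB)
  rw [Finset.mem_product] at hab
  obtain ⟨haA, hbB⟩ := hab
  have hab_ne : a ≠ b := by
    intro h
    have h1 := hAlt a haA
    have h2 := hBgt b hbB
    rw [h] at h1
    linarith
  refine ⟨a, haA, b, hbB, Or.inr ⟨?_, ?_⟩⟩
  · intro a' ha' hne
    have hne2 : b ≠ a' := by
      intro h
      have h1 := hAlt a' ha'
      have h2 := hBgt b hbB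
      rw [h] at h2
      linarith
    have hd : det3 a b a' ≠ 0 :=
      hgp a (Finset.mem_union_left _ haA) b (Finset.mem_union_right _ hbB)
        a' (Finset.mem_union_left _ ha') hab_ne hne2 (Ne.symm hne)
    have hD := hdet a b a'
    have hDa : 0 < (X b - X a) * (Y a' - Y a) - (Y b - Y a) * (X a' - X a) := by
      rcases lt_trichotomy ((X b - X a) * (Y a' - Y a) - (Y b - Y a) * (X a' - X a)) 0
        with hlt | heq | hgt
      · exfalso
        have h1 := hmax (a', b) (Finset.mem_product.2 ⟨ha', hbB⟩)
        have p1 := hpos a haA b hbB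
        have p2 := hpos a' ha' b hbB
        simp only at h1
        rw [div_le_div_iff₀ p2 p1] at h1
        have key : (Y b - Y a') * (X b - X a) - (Y b - Y a) * (X b - X a')
            = -((X b - X a) * (Y a' - Y a) - (Y b - Y a) * (X a' - X a)) := by ring
        linarith
      · exact absurd (by nlinarith : det3 a b a' = 0) hd
      · exact hgt
    have hdet3 : 0 < det3 a b a' := by nlinarith
    have : chi a b a' = 1 := Real.sign_of_pos hdet3
    rw [this]; norm_num
  · intro b' hb' hne
    have hne2 : a ≠ b' := by
      intro h
      have h1 := hAlt a haA
      have h2 := hBgt b' hb'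
      rw [h] at h1
      linarith
    have hd : det3 a b b' ≠ 0 :=
      hgp a (Finset.mem_union_left _ haA) b (Finset.mem_union_right _ hbB)
        b' (Finset.mem_union_right _ hb') hab_ne hne.symm hne2
    have hD := hdet a b b'
    have hDa : (X b - X a) * (Y b' - Y a) - (Y b - Y a) * (X b' - X a) < 0 := by
      rcases lt_trichotomy ((X b - X a) * (Y b' - Y a) - (Y b - Y a) * (X b' - X a)) 0
        with hlt | heq | hgt
      · exact hlt
      · exact absurd (by nlinarith : det3 a b b' = 0) hd
      · exfalso
        have h1 := hmax (a, b') (Finset.mem_product.2 ⟨haA, hb'⟩)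
        have p1 := hpos a haA b hbB
        have p2 := hpos a haA b' hb'
        simp only at h1
        rw [div_le_div_iff₀ p2 p1] at h1
        nlinarith
    have hdet3 : det3 a b b' < 0 := by nlinarith
    have : chi a b b' = -1 := Real.sign_of_neg hdet3
    rw [this]; norm_num
end

section
/- For any four points s_i, s_j, s_k, s_l in the plane with strictly increasing x-coordinates and no three collinear, the sequence of orientations χ(s_i,s_j,s_k), χ(s_i,s_j,s_l), χ(s_i,s_k,s_l), χ(s_j,s_k,s_l) changes its sign at most once; in particular the patterns (+,−,+) and (−,+,−) do not occur as subsequences. -/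
lemma sign_key {A B C c1 c2 t : ℝ} (hc1 : 0 < c1) (hc2 : 0 < c2) (ht : 0 < t)
    (hA : A ≠ 0) (hB : B ≠ 0) (hC : C ≠ 0)
    (hid : t * B = c1 * A + c2 * C)
    (h1 : Real.sign A ≠ Real.sign B) (h2 : Real.sign B ≠ Real.sign C) : False := by
  have memA : A < 0 ∨ 0 < A := hA.lt_or_gt
  have memB : B < 0 ∨ 0 < B := hB.lt_or_gt
  have memC : C < 0 ∨ 0 < C := hC.lt_or_gt
  rcases memA with hA' | hA' <;> rcases memC with hC' | hC'
  · -- A<0, C<0 : t*B < 0 so B < 0, sign B = sign A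
    have : t * B < 0 := by rw [hid]; nlinarith
    have hB' : B < 0 := by nlinarith
    exact h1 (by rw [Real.sign_of_neg hA', Real.sign_of_neg hB'])
  · -- A<0, C>0 : sign B differs from both -1 and 1, impossible
    rcases memB with hB' | hB'
    · exact h1 (by rw [Real.sign_of_neg hA', Real.sign_of_neg hB'])
    · exact h2 (by rw [Real.sign_of_pos hB', Real.sign_of_pos hC'])
  · rcases memB with hB' | hB'
    · exact h2 (by rw [Real.sign_of_neg hB', Real.sign_of_neg hC'])
    · exact h1 (by rw [Real.sign_of_pos hA', Real.sign_of_pos hB'])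
  · have : 0 < t * B := by rw [hid]; nlinarith
    have hB' : 0 < B := by nlinarith
    exact h1 (by rw [Real.sign_of_pos hA', Real.sign_of_pos hB'])

/-- Signotope axiom: for four points with strictly increasing `x`-coordinates and
no three collinear, the sequence `χ(1,2,3), χ(1,2,4), χ(1,3,4), χ(2,3,4)` changes
its sign at most once (no alternating subsequence `+,-,+` or `-,+,-`). -/
theorem signotope_axiom (s : Fin 4 → ℝ × ℝ)
    (hx : StrictMono fun i => (s i).1)
    (hgp : ∀ i j k : Fin 4, i ≠ j → j ≠ k → i ≠ k → det3 (s i) (s j) (s k) ≠ 0) :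
    ∀ i1 i2 i3 : Fin 4, i1 < i2 → i2 < i3 →
      ¬ ((![chi (s 0) (s 1) (s 2), chi (s 0) (s 1) (s 3),
            chi (s 0) (s 2) (s 3), chi (s 1) (s 2) (s 3)] i1 ≠
          ![chi (s 0) (s 1) (s 2), chi (s 0) (s 1) (s 3),
            chi (s 0) (s 2) (s 3), chi (s 1) (s 2) (s 3)] i2) ∧
         (![chi (s 0) (s 1) (s 2), chi (s 0) (s 1) (s 3),
            chi (s 0) (s 2) (s 3), chi (s 1) (s 2) (s 3)] i2 ≠
          ![chi (s 0) (s 1) (s 2), chi (s 0) (s 1) (s 3),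
            chi (s 0) (s 2) (s 3), chi (s 1) (s 2) (s 3)] i3)) := by
  intro i1 i2 i3 h12 h23 h
  set p0 := s 0; set p1 := s 1; set p2 := s 2; set p3 := s 3
  have h01 : (s 0).1 < (s 1).1 := hx (by decide : (0 : Fin 4) < 1)
  have h02 : (s 0).1 < (s 2).1 := hx (by decide : (0 : Fin 4) < 2)
  have h03 : (s 0).1 < (s 3).1 := hx (by decide : (0 : Fin 4) < 3)
  have h12' : (s 1).1 < (s 2).1 := hx (by decide : (1 : Fin 4) < 2)
  have h13 : (s 1).1 < (s 3).1 := hx (by decide : (1 : Fin 4) < 3)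
  have h23' : (s 2).1 < (s 3).1 := hx (by decide : (2 : Fin 4) < 3)
  have E3 : det3 p0 p1 p2 ≠ 0 := hgp 0 1 2 (by decide) (by decide) (by decide)
  have E2 : det3 p0 p1 p3 ≠ 0 := hgp 0 1 3 (by decide) (by decide) (by decide)
  have E1 : det3 p0 p2 p3 ≠ 0 := hgp 0 2 3 (by decide) (by decide) (by decide)
  have E0 : det3 p1 p2 p3 ≠ 0 := hgp 1 2 3 (by decide) (by decide) (by decide)
  have id1 : ((s 2).1 - (s 1).1) * det3 p0 p1 p3 =
      ((s 1).1 - (s 0).1) * det3 p1 p2 p3 + ((s 3).1 - (s 1).1) * det3 p0 p1 p2 := by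
    simp only [det3, p0, p1, p2, p3]; ring
  have id2 : ((s 2).1 - (s 1).1) * det3 p0 p2 p3 =
      ((s 2).1 - (s 0).1) * det3 p1 p2 p3 + ((s 3).1 - (s 2).1) * det3 p0 p1 p2 := by
    simp only [det3, p0, p1, p2, p3]; ring
  have id3 : ((s 2).1 - (s 0).1) * det3 p0 p1 p3 =
      ((s 1).1 - (s 0).1) * det3 p0 p2 p3 + ((s 3).1 - (s 0).1) * det3 p0 p1 p2 := by
    simp only [det3, p0, p1, p2, p3]; ring
  have id4 : ((s 3).1 - (s 1).1) * det3 p0 p2 p3 =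
      ((s 3).1 - (s 0).1) * det3 p1 p2 p3 + ((s 3).1 - (s 2).1) * det3 p0 p1 p3 := by
    simp only [det3, p0, p1, p2, p3]; ring
  obtain ⟨ha, hb⟩ := h
  fin_cases i1 <;> fin_cases i2 <;> fin_cases i3 <;>
    simp only [Fin.mk_lt_mk, chi] at h12 h23 ha hb <;>
    simp only [show ((⟨0, by omega⟩ : Fin 4)) = 0 from rfl, show ((⟨1, by omega⟩ : Fin 4)) = 1 from rfl,
      show ((⟨2, by omega⟩ : Fin 4)) = 2 from rfl, show ((⟨3, by omega⟩ : Fin 4)) = 3 from rfl,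
      Matrix.cons_val_zero, Matrix.cons_val_one, Matrix.head_cons,
      Matrix.cons_val_two, Matrix.tail_cons, Matrix.cons_val_three] at ha hb <;>
    first
    | omega
    | exact sign_key (by linarith) (by linarith) (by linarith) E1 E2 E3 id3 hb.symm ha.symm
    | exact sign_key (by linarith) (by linarith) (by linarith) E0 E2 E3 id1 hb.symm ha.symm
    | exact sign_key (by linarith) (by linarith) (by linarith) E0 E1 E3 id2 hb.symm ha.symm
    | exact sign_key (by linarith) (by linarith) (by linarith) E0 E1 E2 id4 hb.symm ha.symm
end

section
/- In the double circle configuration on 10 points (5 extremal points forming a convex pentagon and 5 'inner' points, each placed just inside an edge of the pentagon near its midpoint), no 4-hole contains two consecutive extremal points of the pentagon. -/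
/-- Double circle on 10 points: five extremal points `v 0, …, v 4` (cyclically)
and five inner points `w i`, where each `w i` lies in the triangle spanned by
`v i`, `v (i+1)` and any third point of the set. Then no 4-hole contains two
consecutive extremal points. -/
theorem double_circle_no_4hole_with_consecutive_extremal
    (S : Finset (ℝ × ℝ)) (v w : Fin 5 → ℝ × ℝ)
    (hcard : S.card = 10) (hgp : GenPos S)
    (hv : ∀ i, v i ∈ S) (hw : ∀ i, w i ∈ S)
    (hcover : ∀ p ∈ S, ∃ i, p = v i ∨ p = w i)
    (hin : ∀ i : Fin 5, ∀ p ∈ S, p ≠ v i → p ≠ v (i + 1) →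
      w i ∈ convexHull ℝ ({v i, v (i + 1), p} : Set (ℝ × ℝ))) :
    ∀ i : Fin 5, ∀ X : Finset (ℝ × ℝ), IsHole S X 4 →
      ¬ (v i ∈ X ∧ v (i + 1) ∈ X) := by
  classical
  intro i X hX hcons
  obtain ⟨hvi, hvi1⟩ := hcons
  obtain ⟨hXS, hXcard, hXconv, hXhole⟩ := hX
  -- images of v and w are disjoint
  set A := Finset.image v Finset.univ with hA
  set B := Finset.image w Finset.univ with hB
  have hSsub : S ⊆ A ∪ B := by
    intro p hp
    obtain ⟨j, hj⟩ := hcover p hp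
    rcases hj with h | h
    · exact Finset.mem_union_left _ (by simp [hA, h])
    · exact Finset.mem_union_right _ (by simp [hB, h])
  have hcardA : A.card ≤ 5 := le_trans Finset.card_image_le (by simp)
  have hcardB : B.card ≤ 5 := le_trans Finset.card_image_le (by simp)
  have hUcard : (A ∪ B).card ≤ 10 := by
    calc (A ∪ B).card ≤ A.card + B.card := Finset.card_union_le _ _
      _ ≤ 10 := by omega
  have hinter : (A ∩ B).card = 0 := by
    have h1 : 10 ≤ (A ∪ B).card := by
      rw [← hcard]; exact Finset.card_le_card hSsub
    have h2 : (A ∪ B).card + (A ∩ B).card = A.card + B.card :=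
      Finset.card_union_add_card_inter A B
    omega
  have hdisj : ∀ j k : Fin 5, w j ≠ v k := by
    intro j k h
    have : w j ∈ A ∩ B := by
      refine Finset.mem_inter.2 ⟨?_, ?_⟩
      · simp only [hA, Finset.mem_image]; exact ⟨k, Finset.mem_univ k, h.symm⟩
      · simp only [hB, Finset.mem_image]; exact ⟨j, Finset.mem_univ j, rfl⟩
    have := Finset.card_pos.2 ⟨_, this⟩
    omega
  by_cases hwX : w i ∈ X
  · -- w i is a vertex of X, but it's in hull of the other three
    have hw1 : w i ≠ v i := hdisj i i
    have hw2 : w i ≠ v (i+1) := hdisj i (i+1)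
    have hTsub : ¬ X ⊆ ({v i, v (i+1), w i} : Finset (ℝ × ℝ)) := by
      intro h
      have := Finset.card_le_card h
      have h3 : ({v i, v (i+1), w i} : Finset (ℝ × ℝ)).card ≤ 3 :=
        le_trans (Finset.card_insert_le _ _)
          (Nat.succ_le_succ (le_trans (Finset.card_insert_le _ _) (by simp)))
      omega
    obtain ⟨p, hpX, hpT⟩ := Finset.not_subset.1 hTsub
    simp only [Finset.mem_insert, Finset.mem_singleton, not_or] at hpT
    obtain ⟨hp1, hp2, hp3⟩ := hpT
    have hpS : p ∈ S := hXS hpX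
    have hwin := hin i p hpS hp1 hp2
    have hsub : ({v i, v (i+1), p} : Set (ℝ × ℝ)) ⊆ ((X.erase (w i) : Finset (ℝ × ℝ)) : Set (ℝ × ℝ)) := by
      intro q hq
      simp only [Set.mem_insert_iff, Set.mem_singleton_iff] at hq
      rcases hq with rfl | rfl | rfl
      · exact Finset.mem_coe.2 (Finset.mem_erase.2 ⟨hw1.symm, hvi⟩)
      · exact Finset.mem_coe.2 (Finset.mem_erase.2 ⟨hw2.symm, hvi1⟩)
      · exact Finset.mem_coe.2 (Finset.mem_erase.2 ⟨hp3, hpX⟩)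
    exact hXconv (w i) hwX (convexHull_mono hsub hwin)
  · -- w i not in X but in hull X
    have hTsub : ¬ X ⊆ ({v i, v (i+1)} : Finset (ℝ × ℝ)) := by
      intro h
      have := Finset.card_le_card h
      have h3 : ({v i, v (i+1)} : Finset (ℝ × ℝ)).card ≤ 2 :=
        le_trans (Finset.card_insert_le _ _) (by simp)
      omega
    obtain ⟨p, hpX, hpT⟩ := Finset.not_subset.1 hTsub
    simp only [Finset.mem_insert, Finset.mem_singleton, not_or] at hpT
    obtain ⟨hp1, hp2⟩ := hpT
    have hpS : p ∈ S := hXS hpX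
    have hwin := hin i p hpS hp1 hp2
    have hsub : ({v i, v (i+1), p} : Set (ℝ × ℝ)) ⊆ (X : Set (ℝ × ℝ)) := by
      intro q hq
      simp only [Set.mem_insert_iff, Set.mem_singleton_iff] at hq
      rcases hq with rfl | rfl | rfl
      · exact hvi
      · exact hvi1
      · exact hpX
    exact hXhole (w i) (hw i) hwX (convexHull_mono hsub hwin)
end

section
/- Let S be a set of n points (n even) consisting of n/2 'outer' points and n/2 'inner' points such that no 3-hole of S uses three outer points. Then S contains at most n/6 pairwise disjoint 5-holes, and at most n/8 pairwise disjoint 6-holes. -/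
/-- Any subset of a hole is itself a hole. -/
lemma hole_subset_hole {S X T : Finset (ℝ × ℝ)} {k : ℕ}
    (hX : IsHole S X k) (hT : T ⊆ X) : IsHole S T T.card := by
  obtain ⟨hXS, _, hXcp, hXh⟩ := hX
  refine ⟨hT.trans hXS, rfl, ?_, ?_⟩
  · intro p hp hmem
    exact hXcp p (hT hp)
      (convexHull_mono (Finset.coe_subset.2 (Finset.erase_subset_erase p hT)) hmem)
  · intro p hpS hpT hmem
    by_cases hpX : p ∈ X
    · exact hXcp p hpX
        (convexHull_mono (Finset.coe_subset.2 (Finset.subset_erase.2 ⟨hT, hpT⟩)) hmem)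
    · exact hXh p hpS hpX (convexHull_mono (Finset.coe_subset.2 hT) hmem)

/-- If an `n`-point set in general position splits into `n/2` outer and `n/2`
inner points such that no 3-hole consists of three outer points, then it has at
most `n/6` pairwise disjoint 5-holes and at most `n/8` pairwise disjoint 6-holes. -/
theorem few_disjoint_5holes_6holes (n : ℕ) (hn : Even n)
    (S O I : Finset (ℝ × ℝ)) (hgp : GenPos S) (hcard : S.card = n)
    (hunion : O ∪ I = S) (hdisj : Disjoint O I)
    (hO : O.card = n / 2) (hI : I.card = n / 2)
    (hno3 : ∀ X : Finset (ℝ × ℝ), X ⊆ O → ¬ IsHole S X 3) :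
    (∀ t : ℕ, ∀ X : Fin t → Finset (ℝ × ℝ),
      (∀ i, IsHole S (X i) 5) → (∀ i j, i ≠ j → DisjHoles (X i) (X j)) →
      6 * t ≤ n) ∧
    (∀ t : ℕ, ∀ X : Fin t → Finset (ℝ × ℝ),
      (∀ i, IsHole S (X i) 6) → (∀ i j, i ≠ j → DisjHoles (X i) (X j)) →
      8 * t ≤ n) := by
  have hn2 : n / 2 * 2 = n := Nat.div_mul_cancel hn.two_dvd
  -- key counting lemma
  have key : ∀ (k t : ℕ) (X : Fin t → Finset (ℝ × ℝ)), 3 ≤ k →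
      (∀ i, IsHole S (X i) k) → (∀ i j, i ≠ j → DisjHoles (X i) (X j)) →
      (k - 2) * t ≤ n / 2 := by
    intro k t X hk hhole hdis
    -- each hole has at least k - 2 inner points
    have hinner : ∀ i, k - 2 ≤ ((X i) ∩ I).card := by
      intro i
      obtain ⟨hXS, hXc, _, _⟩ := hhole i
      have hO2 : ((X i) ∩ O).card ≤ 2 := by
        by_contra h
        push_neg at h
        obtain ⟨T, hTsub, hTcard⟩ := Finset.exists_subset_card_eq (Nat.succ_le_of_lt h)
        have hTX : T ⊆ X i := hTsub.trans (Finset.inter_subset_left)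
        have := hole_subset_hole (hhole i) hTX
        rw [hTcard] at this
        exact hno3 T (hTsub.trans Finset.inter_subset_right) this
      have hcover : X i ⊆ ((X i) ∩ O) ∪ ((X i) ∩ I) := by
        intro p hp
        have hpS : p ∈ S := hXS hp
        rw [← hunion] at hpS
        rcases Finset.mem_union.1 hpS with h | h
        · exact Finset.mem_union_left _ (Finset.mem_inter.2 ⟨hp, h⟩)
        · exact Finset.mem_union_right _ (Finset.mem_inter.2 ⟨hp, h⟩)
      have := (Finset.card_le_card hcover).trans (Finset.card_union_le _ _)
      omega
    -- the inner parts are pairwise disjoint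
    have hpd : ∀ i ∈ (Finset.univ : Finset (Fin t)), ∀ j ∈ Finset.univ, i ≠ j →
        Disjoint ((X i) ∩ I) ((X j) ∩ I) := by
      intro i _ j _ hij
      rw [Finset.disjoint_left]
      intro p hpi hpj
      have h1 : p ∈ convexHull ℝ ((X i : Finset (ℝ × ℝ)) : Set (ℝ × ℝ)) :=
        subset_convexHull ℝ _ (Finset.mem_coe.2 (Finset.mem_inter.1 hpi).1)
      have h2 : p ∈ convexHull ℝ ((X j : Finset (ℝ × ℝ)) : Set (ℝ × ℝ)) :=
        subset_convexHull ℝ _ (Finset.mem_coe.2 (Finset.mem_inter.1 hpj).1)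
      exact Set.disjoint_left.1 (hdis i j hij) h1 h2
    have hbu : (Finset.univ.biUnion fun i => (X i) ∩ I).card
        = ∑ i, ((X i) ∩ I).card := Finset.card_biUnion hpd
    have hsub : (Finset.univ.biUnion fun i => (X i) ∩ I) ⊆ I :=
      Finset.biUnion_subset.2 fun i _ => Finset.inter_subset_right
    have h1 : ∑ i, ((X i) ∩ I).card ≤ I.card := hbu ▸ Finset.card_le_card hsub
    have h2 : (k - 2) * t ≤ ∑ i, ((X i) ∩ I).card := by
      calc (k - 2) * t = ∑ _i : Fin t, (k - 2) := by
            simp [Finset.sum_const, Nat.mul_comm]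
        _ ≤ ∑ i, ((X i) ∩ I).card := Finset.sum_le_sum fun i _ => hinner i
    rw [hI] at h1
    omega
  constructor
  · intro t X h1 h2
    have := key 5 t X (by norm_num) h1 h2
    omega
  · intro t X h1 h2
    have := key 6 t X (by norm_num) h1 h2
    omega
end

section
/- Four points a, b, c, d in general position in the plane with strictly increasing x-coordinates form a 4-gon (are in convex position) if and only if the segment ab bounds the convex hull of {a,b,c,d} and the segment cd bounds the convex hull of {a,b,c,d}; equivalently, c and d lie on the same side of line ab, and a and b lie on the same side of line cd. -/
/-! Since `a` has the smallest and `d` the largest `x`-coordinate, neither lies in the convex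
hull of the other three points, so only `b` and `c` can fail to be vertices. As `c` and `d` lie
strictly to the right of `b`, the vertical line through `b` meets the triangle `acd` only inside
the wedge at `a` spanned by the lines `ac` and `ad`; hence `b ∈ conv {a, c, d}` iff `b` lies
weakly between these lines, i.e. iff `det3 a b c * det3 a b d ≤ 0`. The same argument with apex
`d` handles `c`. -/

lemma det3_add_smul_right (p q r s : ℝ × ℝ) {a b : ℝ} (hab : a + b = 1) :
    det3 p q (a • r + b • s) = a * det3 p q r + b * det3 p q s := by
  obtain rfl : a = 1 - b := by linarith
  simp only [det3, Prod.fst_add, Prod.snd_add, Prod.smul_fst, Prod.smul_snd, smul_eq_mul]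
  ring

lemma det3_neg (p q r : ℝ × ℝ) : det3 (-p) (-q) (-r) = det3 p q r := by
  simp only [det3, Prod.fst_neg, Prod.snd_neg]; ring

lemma notMem_convexHull_of_forall_lt {E : Type*} [AddCommGroup E] [Module ℝ E]
    (f : E →ₗ[ℝ] ℝ) {s : Set E} {p : E} (h : ∀ x ∈ s, f p < f x) : p ∉ convexHull ℝ s :=
  fun hp => lt_irrefl (f p) (convexHull_min h (convex_halfSpace_gt f.isLinear (f p)) hp)

lemma mem_convexHull_triple_iff {E : Type*} [AddCommGroup E] [Module ℝ E] {p q r s : E} :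
    q ∈ convexHull ℝ {p, r, s} ↔ ∃ x ∈ segment ℝ r s, q ∈ segment ℝ p x := by
  rw [convexHull_insert (Set.insert_nonempty r {s}), convexHull_pair, convexJoin_singleton_left]
  simp only [Set.mem_iUnion, exists_prop]

lemma mem_segment_of_det3_eq_zero {p q x : ℝ × ℝ} (hpq : p.1 < q.1) (hqx : q.1 < x.1)
    (hcol : det3 p q x = 0) : q ∈ segment ℝ p x := by
  have hpx : 0 < x.1 - p.1 := by linarith
  refine ⟨(x.1 - q.1) / (x.1 - p.1), (q.1 - p.1) / (x.1 - p.1), by bound, by bound,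
    by field_simp; ring, ?_⟩
  ext
  · simp only [Prod.fst_add, Prod.smul_fst, smul_eq_mul]; field_simp; ring
  · simp only [Prod.snd_add, Prod.smul_snd, smul_eq_mul]
    field_simp
    simp only [det3] at hcol
    linear_combination hcol

lemma det3_mul_det3_nonpos_of_mem_convexHull {p q r s : ℝ × ℝ}
    (hq : q ∈ convexHull ℝ {p, r, s}) : det3 p q r * det3 p q s ≤ 0 := by
  obtain ⟨x, ⟨a, b, ha, hb, hab, rfl⟩, ⟨α, t, hα, ht, hαt, rfl⟩⟩ :=
    mem_convexHull_triple_iff.1 hq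
  obtain rfl : α = 1 - t := by linarith
  obtain rfl : a = 1 - b := by linarith
  have hr : det3 p ((1 - t) • p + t • ((1 - b) • r + b • s)) r = -(t * b) * det3 p r s := by
    simp only [det3, Prod.fst_add, Prod.snd_add, Prod.smul_fst, Prod.smul_snd, smul_eq_mul]
    ring
  have hs : det3 p ((1 - t) • p + t • ((1 - b) • r + b • s)) s = t * (1 - b) * det3 p r s := by
    simp only [det3, Prod.fst_add, Prod.snd_add, Prod.smul_fst, Prod.smul_snd, smul_eq_mul]
    ring
  rw [hr, hs]
  have : 0 ≤ t ^ 2 * b * (1 - b) * det3 p r s ^ 2 := by positivity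
  linarith

lemma mem_convexHull_of_det3_mul_det3_nonpos {p q r s : ℝ × ℝ} (hpq : p.1 < q.1)
    (hqr : q.1 < r.1) (hqs : q.1 < s.1) (h : det3 p q r * det3 p q s ≤ 0) :
    q ∈ convexHull ℝ {p, r, s} := by
  have h0 : (0 : ℝ) ∈ segment ℝ (det3 p q r) (det3 p q s) := by
    rw [segment_eq_uIcc, Set.mem_uIcc]
    rcases mul_nonpos_iff.1 h with ⟨hr, hs⟩ | ⟨hr, hs⟩
    exacts [Or.inr ⟨hs, hr⟩, Or.inl ⟨hr, hs⟩]
  obtain ⟨a, b, ha, hb, hab, hzero⟩ := h0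
  -- `a • r + b • s` is where the segment `rs` crosses the line `pq`.
  have hx : a • r + b • s ∈ segment ℝ r s := ⟨a, b, ha, hb, hab, rfl⟩
  refine mem_convexHull_triple_iff.2
    ⟨a • r + b • s, hx, mem_segment_of_det3_eq_zero hpq ?_ ?_⟩
  · exact (convex_halfSpace_gt (LinearMap.fst ℝ ℝ ℝ).isLinear q.1).segment_subset hqr hqs hx
  · rw [det3_add_smul_right _ _ _ _ hab]
    simpa using hzero

lemma mem_convexHull_iff_det3_mul_det3_nonpos_of_fst_lt {p q r s : ℝ × ℝ} (hpq : p.1 < q.1)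
    (hqr : q.1 < r.1) (hqs : q.1 < s.1) :
    q ∈ convexHull ℝ {p, r, s} ↔ det3 p q r * det3 p q s ≤ 0 :=
  ⟨det3_mul_det3_nonpos_of_mem_convexHull, mem_convexHull_of_det3_mul_det3_nonpos hpq hqr hqs⟩

lemma mem_convexHull_iff_det3_mul_det3_nonpos_of_fst_gt {p q r s : ℝ × ℝ} (hqp : q.1 < p.1)
    (hrq : r.1 < q.1) (hsq : s.1 < q.1) :
    q ∈ convexHull ℝ {p, r, s} ↔ det3 p q r * det3 p q s ≤ 0 := by
  have h := mem_convexHull_iff_det3_mul_det3_nonpos_of_fst_lt (p := -p) (q := -q) (r := -r)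
    (s := -s) (neg_lt_neg hqp) (neg_lt_neg hrq) (neg_lt_neg hsq)
  rwa [det3_neg, det3_neg, ← Set.neg_singleton, ← Set.neg_insert, ← Set.neg_insert,
    convexHull_neg, Set.neg_mem_neg] at h

lemma convexPos_four_iff {a b c d : ℝ × ℝ} (hab : a ≠ b) (hac : a ≠ c) (had : a ≠ d)
    (hbc : b ≠ c) (hbd : b ≠ d) (hcd : c ≠ d) :
    ConvexPos {a, b, c, d} ↔
      a ∉ convexHull ℝ {b, c, d} ∧ b ∉ convexHull ℝ {a, c, d} ∧
        c ∉ convexHull ℝ {a, b, d} ∧ d ∉ convexHull ℝ {a, b, c} := by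
  simp only [ConvexPos, Finset.forall_mem_insert, Finset.mem_singleton, forall_eq]
  rw [Finset.erase_insert (by simp [hab, hac, had]), Finset.erase_insert_of_ne hab,
    Finset.erase_insert (by simp [hbc, hbd]), Finset.erase_insert_of_ne hac,
    Finset.erase_insert_of_ne hbc, Finset.erase_insert (by simp [hcd]),
    Finset.erase_insert_of_ne had, Finset.erase_insert_of_ne hbd, Finset.erase_insert_of_ne hcd,
    Finset.erase_singleton, Finset.insert_empty]
  simp only [Finset.coe_insert, Finset.coe_singleton]

theorem convex_position_iff_bounding_segments_general (a b c d : ℝ × ℝ)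
    (hab : a.1 < b.1) (hbc : b.1 < c.1) (hcd : c.1 < d.1) :
    ConvexPos {a, b, c, d} ↔
      (0 < det3 a b c * det3 a b d ∧ 0 < det3 c d a * det3 c d b) := by
  have ne_of_fst_lt {p q : ℝ × ℝ} (h : p.1 < q.1) : p ≠ q := ne_of_apply_ne Prod.fst h.ne
  rw [convexPos_four_iff (ne_of_fst_lt hab) (ne_of_fst_lt (hab.trans hbc))
    (ne_of_fst_lt (hab.trans (hbc.trans hcd))) (ne_of_fst_lt hbc)
    (ne_of_fst_lt (hbc.trans hcd)) (ne_of_fst_lt hcd)]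
  have ha : a ∉ convexHull ℝ {b, c, d} :=
    notMem_convexHull_of_forall_lt (LinearMap.fst ℝ ℝ ℝ)
      (by simp only [Set.forall_mem_insert, LinearMap.fst_apply]; grind)
  have hd : d ∉ convexHull ℝ {a, b, c} :=
    notMem_convexHull_of_forall_lt (-LinearMap.fst ℝ ℝ ℝ)
      (by simp only [Set.forall_mem_insert, LinearMap.neg_apply, LinearMap.fst_apply]; grind)
  have hb := mem_convexHull_iff_det3_mul_det3_nonpos_of_fst_lt hab hbc (hbc.trans hcd)
  have hc := mem_convexHull_iff_det3_mul_det3_nonpos_of_fst_gt hcd (hab.trans hbc) hbc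
  have hswap : det3 d c a * det3 d c b = det3 c d a * det3 c d b := by simp only [det3]; ring
  rw [Set.insert_comm d, Set.pair_comm, hswap] at hc
  simp only [hb, hc, ha, hd, not_le, not_false_eq_true, true_and, and_true]

/-- Four points in general position with strictly increasing `x`-coordinates are
in convex position iff `c,d` lie on the same side of line `ab` and `a,b` lie on
the same side of line `cd`. -/
theorem convex_position_iff_bounding_segments (a b c d : ℝ × ℝ)
    (hab : a.1 < b.1) (hbc : b.1 < c.1) (hcd : c.1 < d.1)
    (hgp : GenPos {a, b, c, d}) :
    ConvexPos {a, b, c, d} ↔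
      (0 < det3 a b c * det3 a b d ∧ 0 < det3 c d a * det3 c d b) :=
  convex_position_iff_bounding_segments_general a b c d hab hbc hcd
end

section
/- Suppose every set of 10 points in general position contains a 5-hole (Harborth's theorem, h(5)=10). Let S be a set of 17 points in general position sorted by strictly increasing x-coordinates s₁ < ... < s₁₇. If S contains a 5-hole among {s₁,...,s₇}, then S contains two disjoint 5-holes. -/
/-- Assuming Harborth's theorem (`h(5) = 10`): if a 17-point set in general
position, sorted by strictly increasing `x`-coordinates, contains a 5-hole among
its first 7 points, then it contains two disjoint 5-holes. -/
theorem two_disjoint_5holes_of_left_5hole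
    (harborth : ∀ S : Finset (ℝ × ℝ), S.card = 10 → GenPos S →
      ∃ X : Finset (ℝ × ℝ), IsHole S X 5)
    (s : Fin 17 → ℝ × ℝ) (hx : StrictMono fun i => (s i).1)
    (S : Finset (ℝ × ℝ)) (hS : S = Finset.image s Finset.univ) (hgp : GenPos S)
    (X1 : Finset (ℝ × ℝ)) (hX1 : IsHole S X1 5)
    (hX1left : ∀ p ∈ X1, ∃ i : Fin 17, (i : ℕ) < 7 ∧ p = s i) :
    ∃ Y Z : Finset (ℝ × ℝ), IsHole S Y 5 ∧ IsHole S Z 5 ∧ DisjHoles Y Z := by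
  have hsinj : Function.Injective s := by
    intro a b hab
    by_contra hne
    rcases lt_or_gt_of_ne hne with h | h
    · exact absurd (congrArg Prod.fst hab) (ne_of_lt (hx h))
    · exact absurd (congrArg Prod.fst hab) (ne_of_gt (hx h))
  set i6 : Fin 17 := ⟨6, by omega⟩ with hi6
  set i7 : Fin 17 := ⟨7, by omega⟩ with hi7
  set T : Finset (ℝ × ℝ) :=
    Finset.image (fun i : Fin 10 => s ⟨(i : ℕ) + 7, by omega⟩) Finset.univ with hT
  have hTS : T ⊆ S := by
    intro p hp
    rw [hS]
    simp only [hT, Finset.mem_image, Finset.mem_univ, true_and] at hp ⊢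
    rcases hp with ⟨i, rfl⟩
    exact ⟨_, rfl⟩
  have hinj2 : Function.Injective (fun i : Fin 10 => s ⟨(i : ℕ) + 7, by omega⟩) := by
    intro a b hab
    have h := congrArg Fin.val (hsinj hab)
    simp only [Fin.val_mk] at h
    exact Fin.ext (by omega)
  have hTcard : T.card = 10 := by
    rw [hT, Finset.card_image_of_injective _ hinj2]
    simp
  have hTgp : GenPos T := fun p hp q hq r hr => hgp p (hTS hp) q (hTS hq) r (hTS hr)
  obtain ⟨X2, hX2T, hX2card, hX2cp, hX2hole⟩ := harborth T hTcard hTgp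
  have hX2right : ∀ q ∈ X2, (s i7).1 ≤ q.1 := by
    intro q hq
    have hqT := hX2T hq
    simp only [hT, Finset.mem_image, Finset.mem_univ, true_and] at hqT
    rcases hqT with ⟨i, rfl⟩
    rcases Nat.eq_zero_or_pos (i : ℕ) with h | h
    · have : (⟨(i : ℕ) + 7, by omega⟩ : Fin 17) = i7 := Fin.ext (by simp [hi7, h])
      rw [this]
    · exact le_of_lt (hx (show i7 < ⟨(i : ℕ) + 7, by omega⟩ from Fin.mk_lt_mk.mpr (by omega)))
  have hhalf2 : convexHull ℝ (X2 : Set (ℝ × ℝ)) ⊆ {q : ℝ × ℝ | (s i7).1 ≤ q.1} :=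
    convexHull_min (fun q hq => hX2right q hq)
      (convex_halfSpace_ge (LinearMap.isLinear (LinearMap.fst ℝ ℝ ℝ)) _)
  have hX1left' : ∀ p ∈ X1, p.1 ≤ (s i6).1 := by
    intro p hp
    rcases hX1left p hp with ⟨i, hi, rfl⟩
    rcases Nat.lt_or_ge (i : ℕ) 6 with h | h
    · exact le_of_lt (hx (show i < i6 from Fin.lt_def.mpr (by simp [hi6]; omega)))
    · have : i = i6 := Fin.ext (by simp [hi6]; omega)
      rw [this]
  have hhalf1 : convexHull ℝ (X1 : Set (ℝ × ℝ)) ⊆ {q : ℝ × ℝ | q.1 ≤ (s i6).1} :=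
    convexHull_min (fun q hq => hX1left' q hq)
      (convex_halfSpace_le (LinearMap.isLinear (LinearMap.fst ℝ ℝ ℝ)) _)
  have h67 : (s i6).1 < (s i7).1 := hx (show i6 < i7 from Fin.mk_lt_mk.mpr (by omega))
  refine ⟨X1, X2, hX1, ⟨fun p hp => hTS (hX2T hp), hX2card, hX2cp, ?_⟩, ?_⟩
  · intro p hpS hpX2
    rw [hS] at hpS
    simp only [Finset.mem_image, Finset.mem_univ, true_and] at hpS
    rcases hpS with ⟨i, rfl⟩
    by_cases hi : (i : ℕ) < 7
    · intro hmem
      have h2 := hhalf2 hmem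
      have hlt : (s i).1 < (s i7).1 := hx (Fin.lt_def.mpr (by simp [hi7]; omega))
      exact absurd h2 (not_le.mpr hlt)
    · have hmemT : s i ∈ T := by
        simp only [hT, Finset.mem_image, Finset.mem_univ, true_and]
        exact ⟨⟨(i : ℕ) - 7, by omega⟩, congrArg s (Fin.ext (by simp; omega))⟩
      exact hX2hole _ hmemT hpX2
  · rw [DisjHoles, Set.disjoint_left]
    intro a ha1 ha2
    exact absurd ((hhalf1 ha1).trans_lt h67) (not_lt.mpr (hhalf2 ha2))
end
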